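/- Let k ≥ 1 and n ≥ 1 be natural numbers, p ≥ 1 a real number, and c ≥ 0 a real number. For each i = 1, …, k let Pᵢ(t) = Σ_{j=1}^{n} a_{ij}·tʲ be a degree-n univariate real polynomial, and let P(x₁, …, x_k) = Σ_{i=1}^{k} Pᵢ(xᵢ). If |a_{ij}| ≤ 6·j·c / (n·(n+1)·(2n+1)·k^{(p−1)/p}) for every i = 1, …, k and j = 1, …, n, then for all points (x₁,…,x_k) and (x₁′,…,x_k′) in [−1,1]ᵏ, one has |P(x₁,…,x_k) − P(x₁′,…,x_k′)| ≤ c · (Σ_{q=1}^{k} |x_q − x_q′|ᵖ)^{1/p}; that is, P is a c-fair polynomial with respect to the p-norm distance on [−1,1]ᵏ. -/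

import Mathlib

/-!
On `[-1, 1]` the monomial `t ^ j` is `j`-Lipschitz, so the `i`-th summand moves by at most
`(∑ j, j |a i j|) |x i - x' i|`. Since `∑_{j ≤ n} j² = n (n + 1) (2n + 1) / 6`, the coefficient
bound makes this weight at most `c / k ^ ((p - 1) / p)`, giving an `ℓ¹` estimate, and Hölder's
`‖v‖₁ ≤ k ^ (1 - 1/p) ‖v‖_p` turns it into the `p`-norm estimate.
-/

open Finset

section OrderedCommRing

variable {α : Type*} [CommRing α] [LinearOrder α] [IsOrderedRing α] {x y : α}

theorem abs_pow_sub_pow_le_of_abs_le_one (hx : |x| ≤ 1) (hy : |y| ≤ 1) (j : ℕ) :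
    |x ^ j - y ^ j| ≤ j * |x - y| := by
  calc |x ^ j - y ^ j| ≤ |x - y| * j * max |x| |y| ^ (j - 1) := abs_pow_sub_pow_le x y j
    _ ≤ |x - y| * j * 1 := by gcongr; exact pow_le_one₀ (by positivity) (max_le hx hy)
    _ = j * |x - y| := by ring

theorem abs_sum_mul_pow_sub_sum_mul_pow_le (s : Finset ℕ) (a : ℕ → α)
    (hx : |x| ≤ 1) (hy : |y| ≤ 1) :
    |∑ j ∈ s, a j * x ^ j - ∑ j ∈ s, a j * y ^ j| ≤ (∑ j ∈ s, j * |a j|) * |x - y| := by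
  rw [← sum_sub_distrib, sum_mul]
  refine (abs_sum_le_sum_abs _ _).trans (sum_le_sum fun j _ => ?_)
  calc |a j * x ^ j - a j * y ^ j| = |a j| * |x ^ j - y ^ j| := by rw [← mul_sub, abs_mul]
    _ ≤ |a j| * (j * |x - y|) := by gcongr; exact abs_pow_sub_pow_le_of_abs_le_one hx hy j
    _ = j * |a j| * |x - y| := by ring

end OrderedCommRing

theorem sum_Icc_one_sq {K : Type*} [Field K] [CharZero K] (n : ℕ) :
    ∑ j ∈ Icc 1 n, (j : K) ^ 2 = n * (n + 1) * (2 * n + 1) / 6 := by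
  induction n with
  | zero => simp
  | succ m ih =>
    rw [sum_Icc_succ_top (by omega), ih]
    push_cast
    ring

theorem sum_Icc_mul_div_sum_sq_le (n : ℕ) {c K : ℝ} (h : 0 ≤ c / K) :
    ∑ j ∈ Icc 1 n, (j : ℝ) * (6 * j * c / (n * (n + 1) * (2 * n + 1) * K)) ≤ c / K := by
  -- `N / N ≤ 1` rather than `= 1`, so that `n = 0` (a junk division by zero) is covered too
  have hN := div_self_le_one ((n : ℝ) * (n + 1) * (2 * n + 1))
  calc ∑ j ∈ Icc 1 n, (j : ℝ) * (6 * j * c / (n * (n + 1) * (2 * n + 1) * K))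
      = 6 * c / (n * (n + 1) * (2 * n + 1) * K) * ∑ j ∈ Icc 1 n, (j : ℝ) ^ 2 := by
        rw [mul_sum]; exact sum_congr rfl fun j _ => by ring
    _ = c / K * ((n * (n + 1) * (2 * n + 1)) / (n * (n + 1) * (2 * n + 1))) := by
        rw [sum_Icc_one_sq]; generalize (n : ℝ) * (n + 1) * (2 * n + 1) = N; ring
    _ ≤ c / K := mul_le_of_le_one_right h hN

theorem Real.sum_abs_le_card_rpow_mul_rpow_sum_abs_rpow {ι : Type*} (s : Finset ι) (f : ι → ℝ)
    {p : ℝ} (hp : 1 ≤ p) :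
    ∑ i ∈ s, |f i| ≤ (#s : ℝ) ^ ((p - 1) / p) * (∑ i ∈ s, |f i| ^ p) ^ (1 / p) := by
  have hp0 : p ≠ 0 := by positivity
  calc ∑ i ∈ s, |f i| = ((∑ i ∈ s, |f i|) ^ p) ^ (1 / p) := by
        rw [one_div, Real.rpow_rpow_inv (by positivity) hp0]
    _ ≤ ((#s : ℝ) ^ (p - 1) * ∑ i ∈ s, |f i| ^ p) ^ (1 / p) := by
        gcongr; exact Real.rpow_sum_le_const_mul_sum_rpow s f hp
    _ = (#s : ℝ) ^ ((p - 1) / p) * (∑ i ∈ s, |f i| ^ p) ^ (1 / p) := by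
        rw [Real.mul_rpow (by positivity) (by positivity), ← Real.rpow_mul (by positivity),
          mul_one_div]

theorem sum_univariate_polys_linear_bounds_c_fair_pnorm_general
    (k n : ℕ)
    (p : ℝ) (hp : 1 ≤ p) (c : ℝ) (hc : 0 ≤ c) (a : Fin k → ℕ → ℝ)
    (ha : ∀ i, ∀ j ∈ Finset.Icc 1 n,
      |a i j| ≤ 6 * (j : ℝ) * c /
        ((n : ℝ) * ((n : ℝ) + 1) * (2 * (n : ℝ) + 1) *
          (k : ℝ) ^ ((p - 1) / p))) :
    ∀ x x' : Fin k → ℝ, (∀ i, |x i| ≤ 1) → (∀ i, |x' i| ≤ 1) →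
      |(∑ i, ∑ j ∈ Finset.Icc 1 n, a i j * x i ^ j) -
          (∑ i, ∑ j ∈ Finset.Icc 1 n, a i j * x' i ^ j)| ≤
        c * (∑ q, |x q - x' q| ^ p) ^ (1 / p) := by
  intro x x' hx hx'
  set K : ℝ := (k : ℝ) ^ ((p - 1) / p)
  have hcK : 0 ≤ c / K := by positivity
  have hweight (i : Fin k) : ∑ j ∈ Icc 1 n, (j : ℝ) * |a i j| ≤ c / K :=
    (sum_le_sum fun j hj => by gcongr; exact ha i j hj).trans (sum_Icc_mul_div_sum_sq_le n hcK)
  have holder : ∑ i, |x i - x' i| ≤ K * (∑ q, |x q - x' q| ^ p) ^ (1 / p) := by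
    simpa using Real.sum_abs_le_card_rpow_mul_rpow_sum_abs_rpow univ (fun q => x q - x' q) hp
  calc |(∑ i, ∑ j ∈ Icc 1 n, a i j * x i ^ j) - (∑ i, ∑ j ∈ Icc 1 n, a i j * x' i ^ j)|
      ≤ ∑ i, |∑ j ∈ Icc 1 n, a i j * x i ^ j - ∑ j ∈ Icc 1 n, a i j * x' i ^ j| := by
        rw [← sum_sub_distrib]; exact abs_sum_le_sum_abs _ _
    _ ≤ ∑ i, (∑ j ∈ Icc 1 n, (j : ℝ) * |a i j|) * |x i - x' i| :=
        sum_le_sum fun i _ => abs_sum_mul_pow_sub_sum_mul_pow_le _ _ (hx i) (hx' i)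
    _ ≤ c / K * ∑ i, |x i - x' i| := by
        rw [mul_sum]; gcongr with i; exact hweight i
    _ ≤ c / K * K * (∑ q, |x q - x' q| ^ p) ^ (1 / p) := by
        rw [mul_assoc]; gcongr
    _ ≤ c * (∑ q, |x q - x' q| ^ p) ^ (1 / p) := by
        gcongr
        rw [div_mul_eq_mul_div, mul_div_assoc]
        exact mul_le_of_le_one_right hc (div_self_le_one K)

/-- A sum of `k` univariate degree-`n` polynomials, one per coordinate, whose
coefficients satisfy `|a i j| ≤ 6 j c / (n (n+1) (2n+1) k ^ ((p-1)/p))`, is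
`c`-fair with respect to the `p`-norm distance on `[-1, 1]^k`. -/
theorem sum_univariate_polys_linear_bounds_c_fair_pnorm
    (k n : ℕ) (hk : 1 ≤ k) (hn : 1 ≤ n)
    (p : ℝ) (hp : 1 ≤ p) (c : ℝ) (hc : 0 ≤ c) (a : Fin k → ℕ → ℝ)
    (ha : ∀ i, ∀ j ∈ Finset.Icc 1 n,
      |a i j| ≤ 6 * (j : ℝ) * c /
        ((n : ℝ) * ((n : ℝ) + 1) * (2 * (n : ℝ) + 1) *
          (k : ℝ) ^ ((p - 1) / p))) :
    ∀ x x' : Fin k → ℝ, (∀ i, |x i| ≤ 1) → (∀ i, |x' i| ≤ 1) →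
      |(∑ i, ∑ j ∈ Finset.Icc 1 n, a i j * x i ^ j) -
          (∑ i, ∑ j ∈ Finset.Icc 1 n, a i j * x' i ^ j)| ≤
        c * (∑ q, |x q - x' q| ^ p) ^ (1 / p) :=
  sum_univariate_polys_linear_bounds_c_fair_pnorm_general k n p hp c hc a ha
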